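/- arXiv:1009.1460 — 5 statements merged into one kernel-verified Lean document; each statement's English description precedes it below -/
import Mathlib

section
/- Let n be a natural number and let μ be a probability measure on (Fin n → ℝ) that is a product of n probability measures on ℝ (i.e., the coordinates are independent). If f, g : (Fin n → ℝ) → ℝ are both monotone nondecreasing (with respect to the coordinatewise partial order) and both are square-integrable with respect to μ, then ∫ f·g dμ ≥ (∫ f dμ)·(∫ g dμ). The same conclusion holds if f and g are both monotone nonincreasing. -/
/-!
Harris's inequality is proved one coordinate at a time. On `μ.prod ν` with `μ` on a linear
order, the partial integrals `F t = ∫ φ(t, ·) dν` and `G t = ∫ ψ(t, ·) dν` are monotone in `t`,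
so Chebyshev's inequality on the first factor gives `∫ F · ∫ G ≤ ∫ F G`, while the inequality
for `ν` on each section gives `F t G t ≤ ∫ φ(t, ·) ψ(t, ·) dν`. Antitone pairs reduce to
monotone ones by negation.
-/

open MeasureTheory ProbabilityTheory

section Chebyshev

variable {α : Type*} [MeasurableSpace α] {μ : Measure α} [IsProbabilityMeasure μ]

theorem sq_integral_le_integral_sq {X : α → ℝ} (hX : MemLp X 2 μ) :
    (∫ x, X x ∂μ) ^ 2 ≤ ∫ x, X x ^ 2 ∂μ := by
  have h := variance_nonneg X μ
  rw [variance_eq_sub hX] at h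
  simpa using h

/-- Chebyshev's integral inequality: integrate the rearrangement inequality
`F x G y + F y G x ≤ F x G x + F y G y` over `μ.prod μ`. -/
theorem integral_mul_integral_le_integral_mul_of_monovaryOn {F G : α → ℝ} {s : Set α}
    (hF : Integrable F μ) (hG : Integrable G μ) (hFG : Integrable (fun x ↦ F x * G x) μ)
    (hmv : MonovaryOn F G s) (hs : ∀ᵐ x ∂μ, x ∈ s) :
    (∫ x, F x ∂μ) * ∫ x, G x ∂μ ≤ ∫ x, F x * G x ∂μ := by
  have hpair : ∀ᵐ p ∂μ.prod μ, p.1 ∈ s ∧ p.2 ∈ s :=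
    (Measure.quasiMeasurePreserving_fst.ae hs).and (Measure.quasiMeasurePreserving_snd.ae hs)
  have hcross : Integrable (fun p : α × α ↦ F p.1 * G p.2 + F p.2 * G p.1) (μ.prod μ) :=
    (hF.mul_prod hG).add (by simpa only [mul_comm] using hG.mul_prod hF)
  have hdiag : Integrable (fun p : α × α ↦ F p.1 * G p.1 + F p.2 * G p.2) (μ.prod μ) :=
    (hFG.comp_fst μ).add (hFG.comp_snd μ)
  have key := integral_mono_ae hcross hdiag
    (hpair.mono fun p hp ↦ monovaryOn_iff_mul_rearrangement.1 hmv hp.1 hp.2)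
  rw [integral_add (hF.mul_prod hG) (by simpa only [mul_comm] using hG.mul_prod hF),
    integral_add (hFG.comp_fst μ) (hFG.comp_snd μ), integral_prod_mul F G,
    integral_fun_fst (fun x ↦ F x * G x), integral_fun_snd (fun x ↦ F x * G x)] at key
  have hswap : ∫ p : α × α, F p.2 * G p.1 ∂μ.prod μ = (∫ x, F x ∂μ) * ∫ x, G x ∂μ := by
    simpa only [mul_comm] using integral_prod_mul (μ := μ) (ν := μ) G F
  simp only [hswap, probReal_univ, one_smul] at key
  linarith

end Chebyshev

section PartialIntegral

variable {α β : Type*} [MeasurableSpace α] [MeasurableSpace β] {μ : Measure α} {ν : Measure β}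
  [SFinite μ] [SFinite ν]

theorem MeasureTheory.MemLp.ae_memLp_two_prodMk {φ : α × β → ℝ} (hφ : MemLp φ 2 (μ.prod ν)) :
    ∀ᵐ t ∂μ, MemLp (fun y ↦ φ (t, y)) 2 ν := by
  have hsq := (memLp_two_iff_integrable_sq hφ.1).1 hφ
  filter_upwards [hφ.1.prodMk_left, hsq.prod_right_ae] with t hmeas hint
  exact (memLp_two_iff_integrable_sq hmeas).2 hint

/-- By Jensen, `(∫ φ(t, ·) dν)² ≤ ∫ φ(t, ·)² dν` on each section. -/
theorem MeasureTheory.MemLp.integral_prod_left_two [IsProbabilityMeasure ν] {φ : α × β → ℝ}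
    (hφ : MemLp φ 2 (μ.prod ν)) : MemLp (fun t ↦ ∫ y, φ (t, y) ∂ν) 2 μ := by
  have hmeas : AEStronglyMeasurable (fun t ↦ ∫ y, φ (t, y) ∂ν) μ := hφ.1.integral_prod_right'
  have hsq := (memLp_two_iff_integrable_sq hφ.1).1 hφ
  refine (memLp_two_iff_integrable_sq hmeas).2 (hsq.integral_prod_left.mono' (hmeas.pow 2) ?_)
  filter_upwards [hφ.ae_memLp_two_prodMk] with t ht
  simpa only [Real.norm_eq_abs, abs_pow, sq_abs] using sq_integral_le_integral_sq ht

end PartialIntegral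

theorem Monotone.monotoneOn_integral_prodMk {α β : Type*} [Preorder α] [Preorder β]
    [MeasurableSpace β] {φ : α × β → ℝ} (hφ : Monotone φ) (ν : Measure β) :
    MonotoneOn (fun t ↦ ∫ y, φ (t, y) ∂ν) {t | Integrable (fun y ↦ φ (t, y)) ν} :=
  fun _ hs _ ht hst ↦ integral_mono hs ht fun _ ↦ hφ ⟨hst, le_rfl⟩

def HasHarrisInequality {β : Type*} [MeasurableSpace β] [Preorder β] (ν : Measure β) : Prop :=
  ∀ u v : β → ℝ, MemLp u 2 ν → MemLp v 2 ν → Monotone u → Monotone v →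
    (∫ y, u y ∂ν) * ∫ y, v y ∂ν ≤ ∫ y, u y * v y ∂ν

section Harris

variable {α β : Type*} [MeasurableSpace α] [MeasurableSpace β]

theorem hasHarrisInequality_of_subsingleton [Preorder β] [Subsingleton β] (ν : Measure β)
    [IsProbabilityMeasure ν] : HasHarrisInequality ν := by
  intro u v _ _ _ _
  obtain ⟨y⟩ := nonempty_of_isProbabilityMeasure ν
  have hconst : ∀ w : β → ℝ, w = fun _ ↦ w y :=
    fun w ↦ funext fun _ ↦ congrArg w (Subsingleton.elim _ _)
  rw [hconst u, hconst v]
  simp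

theorem HasHarrisInequality.of_measurePreserving [Preorder α] [Preorder β] {μ : Measure α}
    {ν : Measure β} (h : HasHarrisInequality μ) {T : α → β} (hT : MeasurePreserving T μ ν)
    (hTm : Monotone T) : HasHarrisInequality ν := by
  intro u v hu hv hum hvm
  have hcomp : ∀ w : β → ℝ, AEStronglyMeasurable w ν → ∫ y, w y ∂ν = ∫ x, w (T x) ∂μ := by
    intro w hw
    rw [← hT.map_eq] at hw ⊢
    exact integral_map hT.aemeasurable hw
  rw [hcomp u hu.1, hcomp v hv.1, hcomp (fun y ↦ u y * v y) (hu.1.mul hv.1)]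
  exact h _ _ (hu.comp_measurePreserving hT) (hv.comp_measurePreserving hT)
    (hum.comp hTm) (hvm.comp hTm)

theorem HasHarrisInequality.prod [LinearOrder α] [Preorder β] (μ : Measure α) {ν : Measure β}
    [IsProbabilityMeasure μ] [IsProbabilityMeasure ν] (h : HasHarrisInequality ν) :
    HasHarrisInequality (μ.prod ν) := by
  intro φ ψ hφ hψ hφm hψm
  have hφi := hφ.integrable one_le_two
  have hψi := hψ.integrable one_le_two
  have hφψ : Integrable (fun p ↦ φ p * ψ p) (μ.prod ν) := hφ.integrable_mul hψ
  have hFG := hφ.integral_prod_left_two.integrable_mul hψ.integral_prod_left_two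
  have hmv : MonovaryOn (fun t ↦ ∫ y, φ (t, y) ∂ν) (fun t ↦ ∫ y, ψ (t, y) ∂ν)
      {t | Integrable (fun y ↦ φ (t, y)) ν ∧ Integrable (fun y ↦ ψ (t, y)) ν} :=
    ((hφm.monotoneOn_integral_prodMk ν).mono fun _ ht ↦ ht.1).monovaryOn
      ((hψm.monotoneOn_integral_prodMk ν).mono fun _ ht ↦ ht.2)
  have hcheb := integral_mul_integral_le_integral_mul_of_monovaryOn hφi.integral_prod_left
    hψi.integral_prod_left hFG hmv (hφi.prod_right_ae.and hψi.prod_right_ae)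
  have hsections : ∀ᵐ t ∂μ,
      (∫ y, φ (t, y) ∂ν) * (∫ y, ψ (t, y) ∂ν) ≤ ∫ y, φ (t, y) * ψ (t, y) ∂ν := by
    filter_upwards [hφ.ae_memLp_two_prodMk, hψ.ae_memLp_two_prodMk] with t hφt hψt
    exact h _ _ hφt hψt (fun _ _ hy ↦ hφm ⟨le_rfl, hy⟩) (fun _ _ hy ↦ hψm ⟨le_rfl, hy⟩)
  rw [integral_prod φ hφi, integral_prod ψ hψi, integral_prod _ hφψ]
  exact hcheb.trans (integral_mono_ae hFG hφψ.integral_prod_left hsections)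

theorem hasHarrisInequality_pi : ∀ {n : ℕ} {α : Fin n → Type*} [∀ i, MeasurableSpace (α i)]
    [∀ i, LinearOrder (α i)] (μ : ∀ i, Measure (α i)) [∀ i, IsProbabilityMeasure (μ i)],
    HasHarrisInequality (Measure.pi μ)
  | 0, _, _, _, _, _ => hasHarrisInequality_of_subsingleton _
  | _ + 1, α, _, _, μ, _ =>
    (((hasHarrisInequality_pi fun j ↦ μ (Fin.succAbove 0 j)).prod (μ 0)).of_measurePreserving
      (measurePreserving_piFinSuccAbove μ 0).symm (Fin.insertNthOrderIso α 0).monotone)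

end Harris

/-- FKG/Harris inequality for random variables under a product probability measure:
if `f` and `g` are both monotone nondecreasing (or both nonincreasing) and
square-integrable, then `∫ f·g ≥ (∫ f)·(∫ g)`. -/
theorem fkg_inequality_functions (n : ℕ) (μi : Fin n → Measure ℝ)
    [∀ i, IsProbabilityMeasure (μi i)]
    (f g : (Fin n → ℝ) → ℝ)
    (hf2 : MemLp f 2 (Measure.pi μi))
    (hg2 : MemLp g 2 (Measure.pi μi))
    (hmono : (Monotone f ∧ Monotone g) ∨ (Antitone f ∧ Antitone g)) :
    ∫ ω, f ω * g ω ∂(Measure.pi μi) ≥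
      (∫ ω, f ω ∂(Measure.pi μi)) * ∫ ω, g ω ∂(Measure.pi μi) := by
  rcases hmono with ⟨hfm, hgm⟩ | ⟨hfa, hga⟩
  · exact hasHarrisInequality_pi μi f g hf2 hg2 hfm hgm
  · have h := hasHarrisInequality_pi μi (-f) (-g) hf2.neg hg2.neg hfa.neg hga.neg
    simpa only [Pi.neg_apply, integral_neg, neg_mul_neg] using h
end

section
/- For every real α > 2 and every β > 0, ∫_{ℝ²} (1 − (1/(1 + β·‖x‖^{−α}))²) dx = 2c₂·β^{2/α}, where c₂ = π²·(α + 2)/(α²·sin(2π/α)). -/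
/-!
In polar coordinates the integral is `2π ∫₀^∞ r f(r) dr`, and at `t = r^α / β` the
integrand `f(r)` equals `(1 + 2t) / (1 + t)²`. The substitution `r = (β t)^{1/α}` therefore
gives `(2π β^{a} / α) ∫₀^∞ t^{a-1} (1 + 2t) / (1 + t)² dt` with `a = 2/α`. Splitting
`1 + 2t = (1 + t) + t` turns the last integral into
`B(a, 2 - a) + 2 B(1 + a, 1 - a) = (1 + a) Γ(a) Γ(1 - a)`, which is
`(1 + a) π / sin (π a)` by the reflection formula. The Beta integrals over `(0, ∞)` come from
Euler's over `(0, 1)` via `t ↦ t / (1 + t)`.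
-/

open MeasureTheory Real Set

lemma ofReal_rpow_mul_one_sub_rpow {x : ℝ} (hx : x ∈ Icc (0 : ℝ) 1) (u v : ℝ) :
    ((x ^ (u - 1) * (1 - x) ^ (v - 1) : ℝ) : ℂ) =
      (x : ℂ) ^ ((u : ℂ) - 1) * (1 - (x : ℂ)) ^ ((v : ℂ) - 1) := by
  push_cast [Complex.ofReal_cpow hx.1, Complex.ofReal_cpow (sub_nonneg.2 hx.2)]
  rfl

lemma Complex.betaIntegral_ofReal (u v : ℝ) :
    betaIntegral u v = ↑(∫ x in (0 : ℝ)..1, x ^ (u - 1) * (1 - x) ^ (v - 1)) := by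
  rw [← intervalIntegral.integral_ofReal, betaIntegral]
  refine intervalIntegral.integral_congr fun x hx => ?_
  rw [uIcc_of_le zero_le_one] at hx
  exact (ofReal_rpow_mul_one_sub_rpow hx u v).symm

lemma integrableOn_Ioo_rpow_mul_one_sub_rpow {u v : ℝ} (hu : 0 < u) (hv : 0 < v) :
    IntegrableOn (fun x : ℝ => x ^ (u - 1) * (1 - x) ^ (v - 1)) (Ioo 0 1) := by
  have h := Complex.betaIntegral_convergent (u := u) (v := v) (by simpa) (by simpa)
  rw [intervalIntegrable_iff_integrableOn_Ioo_of_le zero_le_one] at h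
  refine IntegrableOn.congr_fun (Integrable.norm h) (fun x hx => ?_) measurableSet_Ioo
  rw [← ofReal_rpow_mul_one_sub_rpow (Ioo_subset_Icc_self hx), Complex.norm_real, norm_of_nonneg]
  exact mul_nonneg (rpow_nonneg hx.1.le _) (rpow_nonneg (sub_nonneg.2 hx.2.le) _)

lemma integral_Ioo_rpow_mul_one_sub_rpow {u v : ℝ} (hu : 0 < u) (hv : 0 < v) :
    ∫ x in Ioo (0 : ℝ) 1, x ^ (u - 1) * (1 - x) ^ (v - 1) =
      Gamma u * Gamma v / Gamma (u + v) := by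
  rw [← integral_Ioc_eq_integral_Ioo, ← intervalIntegral.integral_of_le zero_le_one,
    ← Complex.ofReal_re (∫ x in (0 : ℝ)..1, _), ← Complex.betaIntegral_ofReal,
    ← ProbabilityTheory.beta_eq_betaIntegralReal u v hu hv, ProbabilityTheory.beta]

lemma hasDerivWithinAt_div_one_add_Ioi :
    ∀ t ∈ Ioi (0 : ℝ),
      HasDerivWithinAt (fun t : ℝ => t / (1 + t)) ((1 + t) ^ 2)⁻¹ (Ioi 0) t := by
  intro t (ht : 0 < t)
  have h1t : 1 + t ≠ 0 := by positivity
  refine ((hasDerivAt_id' t).fun_div ((hasDerivAt_id' t).const_add 1) h1t).hasDerivWithinAt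
    |>.congr_deriv ?_
  field_simp
  ring

lemma injOn_div_one_add : InjOn (fun t : ℝ => t / (1 + t)) (Ioi 0) := by
  intro a (ha : 0 < a) b (hb : 0 < b) hab
  field_simp at hab
  linarith

lemma image_div_one_add_Ioi : (fun t : ℝ => t / (1 + t)) '' Ioi 0 = Ioo 0 1 := by
  ext y
  constructor
  · rintro ⟨t, ht : 0 < t, rfl⟩
    exact ⟨by positivity, (div_lt_one (by positivity)).2 (by linarith)⟩
  · rintro ⟨hy0, hy1⟩
    refine ⟨y / (1 - y), div_pos hy0 (by linarith), ?_⟩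
    have : 1 - y ≠ 0 := by linarith
    field_simp
    ring

lemma abs_inv_sq_smul_rpow_div_one_add {t : ℝ} (ht : 0 < t) (u v : ℝ) :
    |((1 + t) ^ 2)⁻¹| • ((t / (1 + t)) ^ (u - 1) * (1 - t / (1 + t)) ^ (v - 1)) =
      t ^ (u - 1) * (1 + t) ^ (-(u + v)) := by
  have h1t : 0 < 1 + t := by linarith
  have hsub : 1 - t / (1 + t) = (1 + t)⁻¹ := by field_simp; ring
  have hpow :
      (1 + t) ^ (-(u + v)) = ((1 + t) ^ 2 * (1 + t) ^ (u - 1) * (1 + t) ^ (v - 1))⁻¹ := by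
    rw [← rpow_two, ← rpow_add h1t, ← rpow_add h1t, ← rpow_neg h1t.le]
    ring_nf
  rw [smul_eq_mul, abs_of_pos (by positivity), hsub, div_rpow ht.le h1t.le, inv_rpow h1t.le,
    hpow]
  field_simp

lemma integrableOn_Ioi_rpow_mul_one_add_rpow_neg {u v : ℝ} (hu : 0 < u) (hv : 0 < v) :
    IntegrableOn (fun t : ℝ => t ^ (u - 1) * (1 + t) ^ (-(u + v))) (Ioi 0) := by
  have h := integrableOn_Ioo_rpow_mul_one_sub_rpow hu hv
  rw [← image_div_one_add_Ioi, integrableOn_image_iff_integrableOn_abs_deriv_smul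
    measurableSet_Ioi hasDerivWithinAt_div_one_add_Ioi injOn_div_one_add] at h
  exact h.congr_fun (fun t ht => abs_inv_sq_smul_rpow_div_one_add ht u v) measurableSet_Ioi

lemma integral_Ioi_rpow_mul_one_add_rpow_neg {u v : ℝ} (hu : 0 < u) (hv : 0 < v) :
    ∫ t in Ioi (0 : ℝ), t ^ (u - 1) * (1 + t) ^ (-(u + v)) =
      Gamma u * Gamma v / Gamma (u + v) := by
  rw [← integral_Ioo_rpow_mul_one_sub_rpow hu hv, ← image_div_one_add_Ioi,
    integral_image_eq_integral_abs_deriv_smul measurableSet_Ioi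
      hasDerivWithinAt_div_one_add_Ioi injOn_div_one_add]
  exact setIntegral_congr_fun measurableSet_Ioi fun t ht =>
    (abs_inv_sq_smul_rpow_div_one_add ht u v).symm

lemma rpow_mul_one_add_two_mul_div_sq {a t : ℝ} (ht : 0 < t) :
    t ^ (a - 1) * ((1 + 2 * t) / (1 + t) ^ 2) =
      2 * (t ^ (a + 1 - 1) * (1 + t) ^ (-(a + 1 + (1 - a)))) +
        t ^ (a - 1) * (1 + t) ^ (-(a + (2 - a))) := by
  have h1t : 0 < 1 + t := by linarith
  have hsq : (1 + t) ^ (-(2 : ℝ)) = ((1 + t) ^ 2)⁻¹ := by rw [rpow_neg h1t.le, rpow_two]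
  rw [show a + 1 - 1 = a - 1 + 1 by ring, rpow_add_one ht.ne',
    show -(a + 1 + (1 - a)) = -2 by ring, show -(a + (2 - a)) = -2 by ring, hsq]
  field_simp
  ring

lemma integral_Ioi_rpow_mul_one_add_two_mul_div_sq {a : ℝ} (ha0 : 0 < a) (ha1 : a < 1) :
    ∫ t in Ioi (0 : ℝ), t ^ (a - 1) * ((1 + 2 * t) / (1 + t) ^ 2) =
      (1 + a) * π / sin (π * a) := by
  have hu : 0 < a + 1 := by linarith
  have hv : 0 < 1 - a := by linarith
  have hv' : 0 < 2 - a := by linarith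
  rw [setIntegral_congr_fun measurableSet_Ioi fun t ht => rpow_mul_one_add_two_mul_div_sq ht,
    integral_add ((integrableOn_Ioi_rpow_mul_one_add_rpow_neg hu hv).const_mul 2)
      (integrableOn_Ioi_rpow_mul_one_add_rpow_neg ha0 hv'),
    integral_const_mul, integral_Ioi_rpow_mul_one_add_rpow_neg hu hv,
    integral_Ioi_rpow_mul_one_add_rpow_neg ha0 hv', show a + 1 + (1 - a) = 2 by ring,
    show a + (2 - a) = 2 by ring, Gamma_two, Gamma_add_one ha0.ne',
    show 2 - a = 1 - a + 1 by ring, Gamma_add_one hv.ne']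
  linear_combination (1 + a) * Gamma_mul_Gamma_one_sub a

lemma integral_Ioi_rpow_mul_comp_rpow (g : ℝ → ℝ) {α : ℝ} (hα : 0 < α) (s : ℝ) :
    ∫ x in Ioi (0 : ℝ), x ^ (s - 1) * g (x ^ α) =
      α⁻¹ * ∫ t in Ioi (0 : ℝ), t ^ (s / α - 1) * g t := by
  rw [← integral_comp_rpow_Ioi_of_pos hα (g := fun t => t ^ (s / α - 1) * g t),
    ← integral_const_mul]
  refine setIntegral_congr_fun measurableSet_Ioi fun x (hx : 0 < x) => ?_
  rw [smul_eq_mul, ← rpow_mul hx.le, ← mul_assoc, ← mul_assoc, ← mul_assoc,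
    inv_mul_cancel₀ hα.ne', one_mul, ← rpow_add hx]
  congr 2
  field_simp
  ring

lemma integral_Ioi_rpow_mul_comp_rpow_div (g : ℝ → ℝ) {α β : ℝ} (hα : 0 < α)
    (hβ : 0 < β) (s : ℝ) :
    ∫ r in Ioi (0 : ℝ), r ^ (s - 1) * g (r ^ α / β) =
      β ^ (s / α) / α * ∫ t in Ioi (0 : ℝ), t ^ (s / α - 1) * g t := by
  set c := β ^ α⁻¹
  have hc : 0 < c := by positivity
  have hcα : c ^ α = β := by rw [← rpow_mul hβ.le, inv_mul_cancel₀ hα.ne', rpow_one]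
  have hcs : c * c ^ (s - 1) = β ^ (s / α) := by
    rw [rpow_sub_one hc.ne', mul_div_cancel₀ _ hc.ne', ← rpow_mul hβ.le, inv_mul_eq_div]
  have hscale := integral_comp_mul_left_Ioi (fun r => r ^ (s - 1) * g (r ^ α / β)) 0 hc
  rw [mul_zero, smul_eq_mul, eq_inv_mul_iff_mul_eq₀ hc.ne'] at hscale
  have hcomp : ∀ x ∈ Ioi (0 : ℝ),
      (c * x) ^ (s - 1) * g ((c * x) ^ α / β) = c ^ (s - 1) * (x ^ (s - 1) * g (x ^ α)) := by
    intro x (hx : 0 < x)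
    rw [mul_rpow hc.le hx.le, mul_rpow hc.le hx.le, hcα, mul_div_cancel_left₀ _ hβ.ne']
    ring
  rw [← hscale, setIntegral_congr_fun measurableSet_Ioi hcomp, integral_const_mul,
    integral_Ioi_rpow_mul_comp_rpow g hα, ← mul_assoc, hcs]
  ring

lemma integral_euclideanSpace_fin_two_fun_norm {F : Type*} [NormedAddCommGroup F]
    [NormedSpace ℝ F] (f : ℝ → F) :
    ∫ x : EuclideanSpace ℝ (Fin 2), f ‖x‖ =
      (2 * π) • ∫ r in Ioi (0 : ℝ), r • f r := by
  rw [integral_fun_norm_addHaar, finrank_euclideanSpace_fin, measureReal_def,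
    EuclideanSpace.volume_ball_fin_two]
  simp only [ENNReal.ofReal_one, one_pow, one_mul, ENNReal.toReal_ofReal pi_nonneg,
    Nat.add_one_sub_one, pow_one]
  rw [mul_smul, two_smul, two_smul]

lemma one_sub_one_div_one_add_mul_rpow_neg_sq {α β r : ℝ} (hβ : 0 < β) (hr : 0 < r) :
    1 - (1 / (1 + β * r ^ (-α))) ^ 2 = (1 + 2 * (r ^ α / β)) / (1 + r ^ α / β) ^ 2 := by
  rw [rpow_neg hr.le]
  field_simp
  ring

/-- For `α > 2` and `β > 0`,
`∫_{ℝ²} (1 − (1/(1 + β‖x‖^{−α}))²) dx = 2c₂ β^{2/α}` with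
`c₂ = π²(α+2)/(α² sin(2π/α))`. -/
theorem planar_integral_two (α β : ℝ) (hα : 2 < α) (hβ : 0 < β) :
    ∫ x : EuclideanSpace ℝ (Fin 2), (1 - (1 / (1 + β * ‖x‖ ^ (-α))) ^ 2) =
      2 * (π ^ 2 * (α + 2) / (α ^ 2 * Real.sin (2 * π / α))) * β ^ (2 / α) := by
  have hα0 : 0 < α := by linarith
  have ha1 : 2 / α < 1 := (div_lt_one hα0).2 hα
  have hradial : ∀ r ∈ Ioi (0 : ℝ), r • (1 - (1 / (1 + β * r ^ (-α))) ^ 2) =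
      r ^ ((2 : ℝ) - 1) * ((1 + 2 * (r ^ α / β)) / (1 + r ^ α / β) ^ 2) := fun r hr => by
    rw [smul_eq_mul, one_sub_one_div_one_add_mul_rpow_neg_sq hβ hr]
    norm_num
  rw [integral_euclideanSpace_fin_two_fun_norm (fun r => 1 - (1 / (1 + β * r ^ (-α))) ^ 2),
    setIntegral_congr_fun measurableSet_Ioi hradial,
    integral_Ioi_rpow_mul_comp_rpow_div (fun t => (1 + 2 * t) / (1 + t) ^ 2) hα0 hβ,
    integral_Ioi_rpow_mul_one_add_two_mul_div_sq (by positivity) ha1,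
    smul_eq_mul]
  field_simp
end

section
/- Let δ be a real number with 0 < δ < 1 and define h : (0,∞) → ℝ by h(t) = t²·2^t·(2^t − 1)^{δ−1}. Then h is strictly increasing on (0,∞), h(t) > 0 for all t > 0, and h(t) → 0 as t → 0⁺. -/
open Real Filter

/-- Core convexity inequality: for `0 < x < y`,
`x e^x (e^y - 1) < y e^y (e^x - 1)`. -/
private lemma exp_key {x y : ℝ} (hx : 0 < x) (hxy : x < y) :
    x * Real.exp x * (Real.exp y - 1) < y * Real.exp y * (Real.exp x - 1) := by
  have hy : 0 < y := hx.trans hxy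
  have hne : (0 : ℝ) ≠ -y := by intro h; nlinarith
  have key := strictConvexOn_exp.2 (Set.mem_univ (0 : ℝ)) (Set.mem_univ (-y)) hne
    (show (0 : ℝ) < 1 - x / y by rw [sub_pos]; exact (div_lt_one hy).mpr hxy)
    (show (0 : ℝ) < x / y by positivity)
    (show (1 - x / y) + x / y = 1 by ring)
  simp only [smul_eq_mul, mul_zero, zero_add, Real.exp_zero, mul_one] at key
  have harg : x / y * -y = -x := by field_simp
  rw [harg] at key
  -- key : exp (-x) < (1 - x/y) + (x/y) * exp (-y)
  have formA : y * Real.exp (-x) < (y - x) + x * Real.exp (-y) := by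
    have h1 := mul_lt_mul_of_pos_left key hy
    have h2 : y * (1 - x / y + x / y * Real.exp (-y)) = (y - x) + x * Real.exp (-y) := by
      field_simp
    linarith [h1, h2.le, h2.ge]
  have r1 : Real.exp (-x) * Real.exp (x + y) = Real.exp y := by
    rw [← Real.exp_add]; congr 1; ring
  have r2 : Real.exp (-y) * Real.exp (x + y) = Real.exp x := by
    rw [← Real.exp_add]; congr 1; ring
  have m : y * Real.exp y < (y - x) * Real.exp (x + y) + x * Real.exp x := by
    calc y * Real.exp y = y * Real.exp (-x) * Real.exp (x + y) := by
          rw [mul_assoc, r1]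
      _ < ((y - x) + x * Real.exp (-y)) * Real.exp (x + y) :=
          mul_lt_mul_of_pos_right formA (Real.exp_pos _)
      _ = (y - x) * Real.exp (x + y) + x * Real.exp x := by
          rw [add_mul, mul_assoc, r2]
  rw [Real.exp_add] at m
  nlinarith [m]

/-- The `2^·` version: for `0 < s < t`,
`s 2^s (2^t - 1) < t 2^t (2^s - 1)`. -/
private lemma base2_key {s t : ℝ} (hs : 0 < s) (hst : s < t) :
    s * (2 : ℝ) ^ s * ((2 : ℝ) ^ t - 1) < t * (2 : ℝ) ^ t * ((2 : ℝ) ^ s - 1) := by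
  have l2 : 0 < Real.log 2 := Real.log_pos one_lt_two
  have ha : (2 : ℝ) ^ s = Real.exp (s * Real.log 2) := by
    rw [Real.rpow_def_of_pos two_pos, mul_comm]
  have hb : (2 : ℝ) ^ t = Real.exp (t * Real.log 2) := by
    rw [Real.rpow_def_of_pos two_pos, mul_comm]
  have h3 := exp_key (mul_pos hs l2) (by nlinarith : s * Real.log 2 < t * Real.log 2)
  rw [ha, hb]
  refine lt_of_mul_lt_mul_left ?_ l2.le
  calc Real.log 2 * (s * Real.exp (s * Real.log 2) * (Real.exp (t * Real.log 2) - 1))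
      = (s * Real.log 2) * Real.exp (s * Real.log 2) * (Real.exp (t * Real.log 2) - 1) := by ring
    _ < (t * Real.log 2) * Real.exp (t * Real.log 2) * (Real.exp (s * Real.log 2) - 1) := h3
    _ = Real.log 2 * (t * Real.exp (t * Real.log 2) * (Real.exp (s * Real.log 2) - 1)) := by ring

private lemma two_rpow_sub_one_pos {t : ℝ} (ht : 0 < t) : 0 < (2 : ℝ) ^ t - 1 := by
  have : (1 : ℝ) < (2 : ℝ) ^ t :=
    (Real.one_lt_rpow_iff_of_pos two_pos).mpr (Or.inl ⟨one_lt_two, ht⟩)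
  linarith

/-- Factorization identity:
`t² 2^t (2^t-1)^{δ-1} = (t² 2^t/(2^t-1))^{1-δ} * (t² 2^t)^δ`. -/
private lemma h_factor (δ : ℝ) {t : ℝ} (ht : 0 < t) :
    t ^ 2 * (2 : ℝ) ^ t * ((2 : ℝ) ^ t - 1) ^ (δ - 1) =
      (t ^ 2 * (2 : ℝ) ^ t / ((2 : ℝ) ^ t - 1)) ^ (1 - δ) * (t ^ 2 * (2 : ℝ) ^ t) ^ δ := by
  set A : ℝ := t ^ 2 * (2 : ℝ) ^ t with hA
  have hApos : 0 < A := mul_pos (pow_pos ht 2) (Real.rpow_pos_of_pos two_pos t)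
  set B : ℝ := (2 : ℝ) ^ t - 1 with hB
  have hBpos : 0 < B := two_rpow_sub_one_pos ht
  have e1 : (A / B) ^ (1 - δ) * A ^ δ = A ^ (1 - δ) * A ^ δ * B ^ (δ - 1) := by
    rw [Real.div_rpow hApos.le hBpos.le, div_eq_mul_inv, ← Real.rpow_neg hBpos.le, neg_sub]
    ring
  have e2 : A ^ (1 - δ) * A ^ δ = A := by
    rw [← Real.rpow_add hApos]; norm_num
  rw [e1, e2]

/-- For `0 < δ < 1`, the function `h(t) = t² 2^t (2^t − 1)^{δ−1}` is strictly
increasing on `(0, ∞)`, positive there, and tends to `0` as `t → 0⁺`. -/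
theorem h_strictMono_pos_tendsto (δ : ℝ) (hδ0 : 0 < δ) (hδ1 : δ < 1) :
    StrictMonoOn (fun t : ℝ => t ^ 2 * (2 : ℝ) ^ t * ((2 : ℝ) ^ t - 1) ^ (δ - 1))
      (Set.Ioi 0) ∧
    (∀ t : ℝ, 0 < t → 0 < t ^ 2 * (2 : ℝ) ^ t * ((2 : ℝ) ^ t - 1) ^ (δ - 1)) ∧
    Tendsto (fun t : ℝ => t ^ 2 * (2 : ℝ) ^ t * ((2 : ℝ) ^ t - 1) ^ (δ - 1))
      (nhdsWithin 0 (Set.Ioi 0)) (nhds 0) := by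
  have l2 : 0 < Real.log 2 := Real.log_pos one_lt_two
  refine ⟨?_, ?_, ?_⟩
  · -- strict monotonicity
    intro s hs t ht hst
    simp only [Set.mem_Ioi] at hs ht
    have hBs : 0 < (2 : ℝ) ^ s - 1 := two_rpow_sub_one_pos hs
    have hBt : 0 < (2 : ℝ) ^ t - 1 := two_rpow_sub_one_pos ht
    have h2s : 0 < (2 : ℝ) ^ s := Real.rpow_pos_of_pos two_pos s
    have h2t : 0 < (2 : ℝ) ^ t := Real.rpow_pos_of_pos two_pos t
    have hAs : 0 < s ^ 2 * (2 : ℝ) ^ s := mul_pos (pow_pos hs 2) h2s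
    have hAt : 0 < t ^ 2 * (2 : ℝ) ^ t := mul_pos (pow_pos ht 2) h2t
    have hGs : 0 < s ^ 2 * (2 : ℝ) ^ s / ((2 : ℝ) ^ s - 1) := div_pos hAs hBs
    have hGt : 0 < t ^ 2 * (2 : ℝ) ^ t / ((2 : ℝ) ^ t - 1) := div_pos hAt hBt
    -- the inner ratio is strictly increasing
    have hratio : s * (2 : ℝ) ^ s / ((2 : ℝ) ^ s - 1) < t * (2 : ℝ) ^ t / ((2 : ℝ) ^ t - 1) :=
      (div_lt_div_iff₀ hBs hBt).mpr (base2_key hs hst)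
    have hratio_pos : 0 < s * (2 : ℝ) ^ s / ((2 : ℝ) ^ s - 1) :=
      div_pos (mul_pos hs h2s) hBs
    have hG : s ^ 2 * (2 : ℝ) ^ s / ((2 : ℝ) ^ s - 1) <
        t ^ 2 * (2 : ℝ) ^ t / ((2 : ℝ) ^ t - 1) := by
      have e1 : s ^ 2 * (2 : ℝ) ^ s / ((2 : ℝ) ^ s - 1) =
          s * (s * (2 : ℝ) ^ s / ((2 : ℝ) ^ s - 1)) := by ring
      have e2 : t ^ 2 * (2 : ℝ) ^ t / ((2 : ℝ) ^ t - 1) =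
          t * (t * (2 : ℝ) ^ t / ((2 : ℝ) ^ t - 1)) := by ring
      rw [e1, e2]
      exact mul_lt_mul'' hst hratio hs.le hratio_pos.le
    have hH : s ^ 2 * (2 : ℝ) ^ s < t ^ 2 * (2 : ℝ) ^ t := by
      have := Real.rpow_lt_rpow_of_exponent_lt one_lt_two hst
      exact mul_lt_mul'' (by nlinarith) this (by positivity) h2s.le
    calc s ^ 2 * (2 : ℝ) ^ s * ((2 : ℝ) ^ s - 1) ^ (δ - 1)
        = (s ^ 2 * (2 : ℝ) ^ s / ((2 : ℝ) ^ s - 1)) ^ (1 - δ) * (s ^ 2 * (2 : ℝ) ^ s) ^ δ :=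
          h_factor δ hs
      _ < (t ^ 2 * (2 : ℝ) ^ t / ((2 : ℝ) ^ t - 1)) ^ (1 - δ) * (t ^ 2 * (2 : ℝ) ^ t) ^ δ := by
          apply mul_lt_mul (Real.rpow_lt_rpow hGs.le hG (by linarith))
            (Real.rpow_le_rpow hAs.le hH.le hδ0.le)
            (Real.rpow_pos_of_pos hAs δ) (Real.rpow_pos_of_pos hGt _).le
      _ = t ^ 2 * (2 : ℝ) ^ t * ((2 : ℝ) ^ t - 1) ^ (δ - 1) := (h_factor δ ht).symm
  · -- positivity
    intro t ht
    exact mul_pos (mul_pos (pow_pos ht 2) (Real.rpow_pos_of_pos two_pos t))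
      (Real.rpow_pos_of_pos (two_rpow_sub_one_pos ht) _)
  · -- limit at 0⁺ by squeezing
    set L : ℝ := Real.log 2 ^ (δ - 1) with hL
    have hLpos : 0 < L := Real.rpow_pos_of_pos l2 _
    have hmem : ∀ᶠ t in nhdsWithin (0 : ℝ) (Set.Ioi 0), t ∈ Set.Ioi (0 : ℝ) :=
      eventually_mem_nhdsWithin
    have hlt1 : ∀ᶠ t in nhdsWithin (0 : ℝ) (Set.Ioi 0), t < 1 :=
      (eventually_lt_nhds one_pos).filter_mono nhdsWithin_le_nhds
    apply squeeze_zero' (g := fun t : ℝ => t * (2 * L))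
    · filter_upwards [hmem] with t ht
      exact (mul_pos (mul_pos (pow_pos ht 2) (Real.rpow_pos_of_pos two_pos t))
        (Real.rpow_pos_of_pos (two_rpow_sub_one_pos ht) _)).le
    · filter_upwards [hmem, hlt1] with t ht ht1
      have ht' : (0 : ℝ) < t := ht
      have h2t : 0 < (2 : ℝ) ^ t := Real.rpow_pos_of_pos two_pos t
      have htl : 0 < t * Real.log 2 := mul_pos ht' l2
      have hexp : (2 : ℝ) ^ t = Real.exp (t * Real.log 2) := by
        rw [Real.rpow_def_of_pos two_pos, mul_comm]
      have hlow : t * Real.log 2 ≤ (2 : ℝ) ^ t - 1 := by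
        have := Real.add_one_le_exp (t * Real.log 2)
        rw [hexp]; linarith
      have b1 : ((2 : ℝ) ^ t - 1) ^ (δ - 1) ≤ (t * Real.log 2) ^ (δ - 1) :=
        Real.rpow_le_rpow_of_nonpos htl hlow (by linarith)
      have b3 : (t * Real.log 2) ^ (δ - 1) = t ^ (δ - 1) * L :=
        Real.mul_rpow ht'.le l2.le
      have b4 : t ^ 2 * t ^ (δ - 1) = t ^ (δ + 1) := by
        rw [← Real.rpow_two, ← Real.rpow_add ht']
        congr 1; ring
      have b5 : t ^ (δ + 1) ≤ t := by
        have := Real.rpow_le_rpow_of_exponent_ge ht' ht1.le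
          (by linarith : (1 : ℝ) ≤ δ + 1)
        rwa [Real.rpow_one] at this
      have b6 : (2 : ℝ) ^ t ≤ 2 := by
        have := Real.rpow_le_rpow_of_exponent_le one_le_two ht1.le
        rwa [Real.rpow_one] at this
      have b7 : t ^ (δ + 1) * (2 : ℝ) ^ t ≤ t * 2 :=
        mul_le_mul b5 b6 h2t.le ht'.le
      calc t ^ 2 * (2 : ℝ) ^ t * ((2 : ℝ) ^ t - 1) ^ (δ - 1)
          ≤ t ^ 2 * (2 : ℝ) ^ t * ((t * Real.log 2) ^ (δ - 1)) :=
            mul_le_mul_of_nonneg_left b1 (by positivity)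
        _ = t ^ (δ + 1) * (2 : ℝ) ^ t * L := by
            rw [b3, ← b4]; ring
        _ ≤ t * 2 * L := mul_le_mul_of_nonneg_right b7 hLpos.le
        _ = t * (2 * L) := by ring
    · have : Tendsto (fun t : ℝ => t * (2 * L)) (nhds (0 : ℝ)) (nhds (0 * (2 * L))) :=
        tendsto_id.mul_const _
      rw [zero_mul] at this
      exact this.mono_left nhdsWithin_le_nhds
end

section
/- Let α > 2, δ = 2/α, and let B₁, B₂, F > 0. Define f : (0,F) → ℝ by f(x) = (2^{B₁/x} − 1)^δ + (2^{B₂/(F−x)} − 1)^δ. Then f is strictly convex on the open interval (0,F). -/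
/-!
Substituting `2 ^ (B / x) = exp (k / x)` with `k = B log 2`, each summand is
`g(x) = (exp (k / x) - 1) ^ δ`, and `g'(x) = -(δ / k) h(k / x)` with
`h(t) = t² eᵗ (eᵗ - 1)^(δ - 1)`. Writing `h(t) = (eᵗ - 1)^δ · t² / (1 - e⁻ᵗ)`, both factors are
positive and increasing, the second because the secant slope `(1 - e⁻ᵗ) / t` of the concave
function `1 - e⁻ᵗ` decreases. As `k / x` decreases, `g'` increases, so `g` is strictly convex
on `(0, ∞)`; the second summand is the first one reflected by `x ↦ F - x`.
-/

open Real Set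

theorem StrictConvexOn.comp_sub_left {E : Type*} [AddCommGroup E] [Module ℝ E] {s : Set E}
    {f : E → ℝ} (hf : StrictConvexOn ℝ s f) (c : E) :
    StrictConvexOn ℝ ((fun x => c - x) ⁻¹' s) (fun x => f (c - x)) := by
  have hcomb : ∀ {x y : E} {a b : ℝ}, a + b = 1 →
      c - (a • x + b • y) = a • (c - x) + b • (c - y) := fun hab => by
    rw [smul_sub, smul_sub, sub_add_sub_comm, Convex.combo_self hab]
  refine ⟨fun x hx y hy a b ha hb hab => ?_, fun x hx y hy hxy a b ha hb hab => ?_⟩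
  · simpa only [mem_preimage, hcomb hab] using hf.1 hx hy ha hb hab
  · simpa only [hcomb hab] using hf.2 hx hy (sub_right_injective.ne hxy) ha hb hab

theorem strictMonoOn_sq_div_one_sub_exp_neg :
    StrictMonoOn (fun t : ℝ => t ^ 2 / (1 - exp (-t))) (Ioi 0) := by
  intro x (hx : 0 < x) y (hy : 0 < y) hxy
  have hconv : StrictConvexOn ℝ univ (fun t => exp (-t)) := by
    simpa using strictConvexOn_exp.comp_sub_left 0
  have hslope := hconv.secant_strict_mono (a := 0) (mem_univ _) (mem_univ x) (mem_univ y)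
    hx.ne' hy.ne' hxy
  simp only [neg_zero, exp_zero, sub_zero] at hslope
  have hx1 : 0 < 1 - exp (-x) := sub_pos.2 (exp_lt_one_iff.2 (neg_lt_zero.2 hx))
  have hy1 : 0 < 1 - exp (-y) := sub_pos.2 (exp_lt_one_iff.2 (neg_lt_zero.2 hy))
  rw [div_lt_div_iff₀ hx1 hy1]
  rw [div_lt_div_iff₀ hx hy] at hslope
  nlinarith [mul_lt_mul_of_pos_left hslope hx, mul_pos (sub_pos.2 hxy) (mul_pos hy hx1)]

namespace BandwidthSplit

noncomputable def h (δ t : ℝ) : ℝ := t ^ 2 * exp t * (exp t - 1) ^ (δ - 1)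

lemma h_eq_rpow_mul {δ t : ℝ} (ht : 0 < t) :
    h δ t = (exp t - 1) ^ δ * (t ^ 2 / (1 - exp (-t))) := by
  have he : 0 < exp t - 1 := sub_pos.2 (one_lt_exp_iff.2 ht)
  rw [h, rpow_sub_one he.ne', exp_neg]
  field_simp

lemma h_strictMonoOn {δ : ℝ} (hδ : 0 < δ) : StrictMonoOn (h δ) (Ioi 0) := by
  intro x (hx : 0 < x) y (hy : 0 < y) hxy
  have hex : 0 < exp x - 1 := sub_pos.2 (one_lt_exp_iff.2 hx)
  rw [h_eq_rpow_mul hx, h_eq_rpow_mul hy]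
  refine mul_lt_mul'' ?_ (strictMonoOn_sq_div_one_sub_exp_neg hx hy hxy) ?_ ?_
  · exact rpow_lt_rpow hex.le (by linarith [exp_lt_exp.2 hxy]) hδ
  · positivity
  · exact div_nonneg (sq_nonneg x) (sub_nonneg.2 (exp_le_one_iff.2 (neg_nonpos.2 hx.le)))

lemma hasDerivAt_exp_div_sub_one_rpow {k δ x : ℝ} (hk : k ≠ 0) (hx : x ≠ 0) :
    HasDerivAt (fun x => (exp (k / x) - 1) ^ δ) (-(δ / k) * h δ (k / x)) x := by
  have hne : exp (k / x) - 1 ≠ 0 :=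
    sub_ne_zero.2 fun h1 => div_ne_zero hk hx ((exp_eq_one_iff _).1 h1)
  have hdiv : HasDerivAt (fun x => k / x) (-k / x ^ 2) x := by
    simpa [div_eq_mul_inv, neg_div] using (hasDerivAt_inv hx).const_mul k
  convert (hdiv.exp.sub_const 1).rpow_const (p := δ) (Or.inl hne) using 1
  rw [h]
  field_simp

theorem strictConvexOn_exp_div_sub_one_rpow {k δ : ℝ} (hk : 0 < k) (hδ : 0 < δ) :
    StrictConvexOn ℝ (Ioi 0) (fun x => (exp (k / x) - 1) ^ δ) := by
  have hderiv : ∀ x ∈ Ioi (0 : ℝ), HasDerivAt (fun x => (exp (k / x) - 1) ^ δ)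
      (-(δ / k) * h δ (k / x)) x := fun x hx =>
    hasDerivAt_exp_div_sub_one_rpow hk.ne' (ne_of_gt hx)
  refine StrictMonoOn.strictConvexOn_of_deriv (convex_Ioi 0)
    (fun x hx => (hderiv x hx).continuousAt.continuousWithinAt) ?_
  rw [interior_Ioi]
  intro x (hx : 0 < x) y (hy : 0 < y) hxy
  rw [(hderiv x hx).deriv, (hderiv y hy).deriv, neg_mul, neg_mul, neg_lt_neg_iff]
  exact mul_lt_mul_of_pos_left
    (h_strictMonoOn hδ (div_pos hk hy) (div_pos hk hx) (div_lt_div_of_pos_left hk hx hxy))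
    (div_pos hδ hk)

end BandwidthSplit

open BandwidthSplit

theorem bandwidth_objective_strictConvexOn_general (α : ℝ) (hα : 2 < α) (B₁ B₂ F : ℝ)
    (hB₁ : 0 < B₁) (hB₂ : 0 < B₂) :
    StrictConvexOn ℝ (Set.Ioo (0 : ℝ) F)
      (fun x : ℝ =>
        ((2 : ℝ) ^ (B₁ / x) - 1) ^ (2 / α) + ((2 : ℝ) ^ (B₂ / (F - x)) - 1) ^ (2 / α)) := by
  have hδ : 0 < 2 / α := div_pos two_pos (two_pos.trans hα)
  have hk {B : ℝ} (hB : 0 < B) : 0 < log 2 * B := mul_pos (log_pos one_lt_two) hB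
  simp only [rpow_def_of_pos two_pos, ← mul_div_assoc]
  have hleft := (strictConvexOn_exp_div_sub_one_rpow (hk hB₁) hδ).subset
    Ioo_subset_Ioi_self (convex_Ioo 0 F)
  have hright := ((strictConvexOn_exp_div_sub_one_rpow (hk hB₂) hδ).comp_sub_left F).subset
    (fun x hx => sub_pos.2 hx.2) (convex_Ioo 0 F)
  exact hleft.add hright

/-- The bandwidth-allocation objective
`f(x) = (2^{B₁/x} − 1)^{2/α} + (2^{B₂/(F−x)} − 1)^{2/α}` is strictly convex
on `(0, F)` when `α > 2`. -/
theorem bandwidth_objective_strictConvexOn (α : ℝ) (hα : 2 < α) (B₁ B₂ F : ℝ)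
    (hB₁ : 0 < B₁) (hB₂ : 0 < B₂) (hF : 0 < F) :
    StrictConvexOn ℝ (Set.Ioo (0 : ℝ) F)
      (fun x : ℝ =>
        ((2 : ℝ) ^ (B₁ / x) - 1) ^ (2 / α) + ((2 : ℝ) ^ (B₂ / (F - x)) - 1) ^ (2 / α)) :=
  bandwidth_objective_strictConvexOn_general α hα B₁ B₂ F hB₁ hB₂
end

section
/- Let α > 2, δ = 2/α, and let B₁, B₂, F > 0 with B₁ ≠ B₂. Define f : (0,F) → ℝ by f(x) = (2^{B₁/x} − 1)^δ + (2^{B₂/(F−x)} − 1)^δ, and let x_p = F·B₁/(B₁ + B₂) be the proportional bandwidth allocation. Then x_p is not a minimizer of f on (0,F): there exists x ∈ (0,F) with f(x) < f(x_p). Equivalently, f′(x_p) = δ·(ln 2)·h((B₁+B₂)/F)·(1/B₂ − 1/B₁) ≠ 0, where h(t) = t²·2^t·(2^t − 1)^{δ−1}. -/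
/-!
At the proportional allocation `x_p` both exponents equal `t = (B₁ + B₂)/F`, so by the chain rule
`f′(x_p) = φ′(t) · t² · (1/B₂ − 1/B₁)` with `φ(s) = (2^s − 1)^δ` and `φ′(t) > 0`. This is nonzero
when `B₁ ≠ B₂`, and by Fermat's theorem `x_p` is then not even a local minimizer of `f`.
-/

open Real Filter Topology

theorem exists_lt_of_hasDerivAt_ne_zero {f : ℝ → ℝ} {f' a : ℝ} {s : Set ℝ} (hs : s ∈ 𝓝 a)
    (hf : HasDerivAt f f' a) (hf' : f' ≠ 0) : ∃ y ∈ s, f y < f a := by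
  by_contra! h
  exact hf' (IsLocalMin.hasDerivAt_eq_zero (mem_of_superset hs h) hf)

theorem hasDerivAt_two_rpow_sub_one_rpow (δ : ℝ) {t : ℝ} (ht : t ≠ 0) :
    HasDerivAt (fun s : ℝ => ((2 : ℝ) ^ s - 1) ^ δ)
      (δ * log 2 * ((2 : ℝ) ^ t * ((2 : ℝ) ^ t - 1) ^ (δ - 1))) t := by
  have hbase : (2 : ℝ) ^ t - 1 ≠ 0 := by
    rw [sub_ne_zero, ← rpow_zero 2, Ne, rpow_right_inj two_pos (by norm_num)]
    exact ht
  have hexp := ((hasDerivAt_id' t).const_rpow two_pos).sub_const 1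
  convert hexp.rpow_const (p := δ) (Or.inl hbase) using 1
  ring

theorem div_sq_eq_sq_div_of_div_eq {a b t : ℝ} (h : a / b = t) : a / b ^ 2 = t ^ 2 / a := by
  rcases eq_or_ne a 0 with rfl | ha
  · simp
  · rw [← h]; field_simp

theorem hasDerivAt_comp_div_add_comp_div_sub {φ : ℝ → ℝ} {φ' t B₁ B₂ F x : ℝ}
    (hφ : HasDerivAt φ φ' t) (hx : x ≠ 0) (hFx : F - x ≠ 0)
    (h₁ : B₁ / x = t) (h₂ : B₂ / (F - x) = t) :
    HasDerivAt (fun y => φ (B₁ / y) + φ (B₂ / (F - y))) (φ' * t ^ 2 * (1 / B₂ - 1 / B₁)) x := by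
  have hd₁ : HasDerivAt (fun y => B₁ / y) (-(t ^ 2 / B₁)) x := by
    simpa [← div_sq_eq_sq_div_of_div_eq h₁, div_eq_mul_inv] using
      (hasDerivAt_inv hx).const_mul B₁
  have hd₂ : HasDerivAt (fun y => B₂ / (F - y)) (t ^ 2 / B₂) x := by
    simpa [← div_sq_eq_sq_div_of_div_eq h₂, div_eq_mul_inv] using
      (((hasDerivAt_id' x).const_sub F).inv hFx).const_mul B₂
  exact (((h₁ ▸ hφ).comp x hd₁).add ((h₂ ▸ hφ).comp x hd₂)).congr_deriv (by ring)

/-- Asymmetric traffic: for `B₁ ≠ B₂`, the proportional allocation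
`x_p = F·B₁/(B₁+B₂)` is not a minimizer of
`f(x) = (2^{B₁/x} − 1)^{2/α} + (2^{B₂/(F−x)} − 1)^{2/α}` on `(0, F)`;
equivalently, `f′(x_p) = δ ln 2 · h((B₁+B₂)/F) · (1/B₂ − 1/B₁) ≠ 0` where
`δ = 2/α` and `h(t) = t² 2^t (2^t − 1)^{δ−1}`. -/
theorem proportional_allocation_suboptimal (α : ℝ) (hα : 2 < α) (B₁ B₂ F : ℝ)
    (hB₁ : 0 < B₁) (hB₂ : 0 < B₂) (hF : 0 < F) (hne : B₁ ≠ B₂) :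
    (∃ x ∈ Set.Ioo (0 : ℝ) F,
      ((2 : ℝ) ^ (B₁ / x) - 1) ^ (2 / α) + ((2 : ℝ) ^ (B₂ / (F - x)) - 1) ^ (2 / α) <
        ((2 : ℝ) ^ (B₁ / (F * B₁ / (B₁ + B₂))) - 1) ^ (2 / α) +
          ((2 : ℝ) ^ (B₂ / (F - F * B₁ / (B₁ + B₂))) - 1) ^ (2 / α)) ∧
    HasDerivAt
      (fun x : ℝ =>
        ((2 : ℝ) ^ (B₁ / x) - 1) ^ (2 / α) + ((2 : ℝ) ^ (B₂ / (F - x)) - 1) ^ (2 / α))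
      ((2 / α) * Real.log 2 *
        (((B₁ + B₂) / F) ^ 2 * (2 : ℝ) ^ ((B₁ + B₂) / F) *
          ((2 : ℝ) ^ ((B₁ + B₂) / F) - 1) ^ (2 / α - 1)) *
        (1 / B₂ - 1 / B₁))
      (F * B₁ / (B₁ + B₂)) ∧
    (2 / α) * Real.log 2 *
        (((B₁ + B₂) / F) ^ 2 * (2 : ℝ) ^ ((B₁ + B₂) / F) *
          ((2 : ℝ) ^ ((B₁ + B₂) / F) - 1) ^ (2 / α - 1)) *
        (1 / B₂ - 1 / B₁) ≠ 0 := by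
  have hS : 0 < B₁ + B₂ := add_pos hB₁ hB₂
  set t := (B₁ + B₂) / F
  set xp := F * B₁ / (B₁ + B₂)
  have ht : 0 < t := by positivity
  have hxp : xp ∈ Set.Ioo 0 F := ⟨by positivity, by rw [div_lt_iff₀ hS]; nlinarith⟩
  have h₁ : B₁ / xp = t := by simp only [xp, t]; field_simp
  have hFxp : F - xp = F * B₂ / (B₁ + B₂) := by simp only [xp]; field_simp; ring
  have h₂ : B₂ / (F - xp) = t := by rw [hFxp]; simp only [t]; field_simp
  set D := 2 / α * log 2 * (t ^ 2 * 2 ^ t * (2 ^ t - 1) ^ (2 / α - 1)) * (1 / B₂ - 1 / B₁)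
  have hD : HasDerivAt _ D xp :=
    (hasDerivAt_comp_div_add_comp_div_sub (hasDerivAt_two_rpow_sub_one_rpow (2 / α) ht.ne')
      hxp.1.ne' (sub_ne_zero.2 hxp.2.ne') h₁ h₂).congr_deriv (by simp only [D]; ring)
  have hD0 : D ≠ 0 := by
    have hα₀ : 0 < α := by linarith
    have hpow : 0 < ((2 : ℝ) ^ t - 1) ^ (2 / α - 1) :=
      rpow_pos_of_pos (sub_pos.2 (one_lt_rpow one_lt_two ht)) _
    have hgap : 1 / B₂ - 1 / B₁ ≠ 0 := by
      simpa [sub_eq_zero, eq_comm] using hne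
    exact mul_ne_zero (by positivity) hgap
  exact ⟨exists_lt_of_hasDerivAt_ne_zero (isOpen_Ioo.mem_nhds hxp) hD hD0, hD, hD0⟩
end
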